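/- arXiv:2402.04675 — 2 statements merged into one kernel-verified Lean document; each statement's English description precedes it below -/
import Mathlib

section
/- (ABP lower contact set inclusion) Let E ⊂ {x_n > 0} be a bounded connected open set with ∂E \ {x_n ≤ 0} a smooth hypersurface meeting {x_n = 0} orthogonally, and let u ∈ C¹(Ē) ∩ C^∞(E) solve Δu = P_λ(E)/|E| in E, ∂u/∂ν = 1 on ∂E ∩ {x_n > 0}, ∂u/∂ν = -λ on ∂E ∩ {x_n = 0}. Then B^λ ⊂ ∇u(Γ_u), where Γ_u = {x ∈ E : u(y) ≥ u(x) + ⟨∇u(x), y-x⟩ for all y ∈ Ē} is the lower contact set. -/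
open MeasureTheory Metric Set Filter Topology
open scoped ENNReal NNReal RealInnerProductSpace symmDiff

noncomputable section

/-- Euclidean `n`-space. -/
abbrev V (n : ℕ) : Type := EuclideanSpace ℝ (Fin n)

/-- The index of the last coordinate. -/
def lastIdx (n : ℕ) [NeZero n] : Fin n :=
  ⟨n - 1, Nat.sub_lt (Nat.pos_of_ne_zero (NeZero.ne n)) Nat.one_pos⟩

/-- The last standard basis vector `e_n`. -/
def eN (n : ℕ) [NeZero n] : V n := EuclideanSpace.single (lastIdx n) (1 : ℝ)

/-- The open upper half-space `{x_n > 0}`. -/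
def upperHalf (n : ℕ) [NeZero n] : Set (V n) := {x | 0 < x (lastIdx n)}

/-- The boundary hyperplane `{x_n = 0}`. -/
def hyp (n : ℕ) [NeZero n] : Set (V n) := {x | x (lastIdx n) = 0}

/-- Divergence of a vector field. -/
def vdiv {n : ℕ} (T : V n → V n) (x : V n) : ℝ :=
  LinearMap.trace ℝ (V n) (fderiv ℝ T x : V n →ₗ[ℝ] V n)

/-- Relative perimeter of `E` in `A`, via the variational (De Giorgi) definition. -/
def relPer {n : ℕ} (E A : Set (V n)) : ℝ≥0∞ :=
  ⨆ (T : V n → V n) (_ : ContDiff ℝ 1 T ∧ HasCompactSupport T ∧ tsupport T ⊆ A ∧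
      ∀ x, ‖T x‖ ≤ 1), ENNReal.ofReal (∫ x in E, vdiv T x)

/-- Total perimeter of a set in `ℝⁿ`. -/
def per {n : ℕ} (E : Set (V n)) : ℝ≥0∞ := relPer E Set.univ

/-- The reduced (essential) boundary of a set: points of Lebesgue density neither `0` nor `1`
(this coincides with the reduced boundary up to `H^{n-1}`-negligible sets). -/
def redBdry {n : ℕ} (E : Set (V n)) : Set (V n) :=
  {x | ¬ Tendsto (fun r : ℝ => volume (E ∩ ball x r) / volume (ball x r))
        (nhdsWithin (0 : ℝ) (Set.Ioi 0)) (nhds (0 : ℝ≥0∞)) ∧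
      ¬ Tendsto (fun r : ℝ => volume (E ∩ ball x r) / volume (ball x r))
        (nhdsWithin (0 : ℝ) (Set.Ioi 0)) (nhds (1 : ℝ≥0∞))}

/-- `ν` is the (measure-theoretic) outer unit normal of `E` at `x`: the blow-ups of `E`
at `x` converge to the half-space `{⟨y - x, ν⟩ < 0}`. -/
def IsOuterNormal {n : ℕ} (E : Set (V n)) (x ν : V n) : Prop :=
  ‖ν‖ = 1 ∧ Tendsto (fun r : ℝ =>
      volume ((E ∆ {y : V n | ⟪y - x, ν⟫ < 0}) ∩ ball x r) / volume (ball x r))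
    (nhdsWithin (0 : ℝ) (Set.Ioi 0)) (nhds (0 : ℝ≥0∞))

/-- The wetted region measure `H^{n-1}(∂*E ∩ {x_n = 0})`. -/
def wetted (n : ℕ) [NeZero n] (E : Set (V n)) : ℝ≥0∞ :=
  μH[(n : ℝ) - 1] (redBdry E ∩ hyp n)

/-- The capillarity perimeter `P_λ(E) = P(E, {x_n>0}) - λ H^{n-1}(∂*E ∩ {x_n=0})`. -/
def Pl (n : ℕ) [NeZero n] (lam : ℝ) (E : Set (V n)) : ℝ :=
  (relPer E (upperHalf n)).toReal - lam * (wetted n E).toReal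

/-- The truncated unit ball `B^λ = {x ∈ B_1(0) : x_n > λ}`. -/
def Bl (n : ℕ) [NeZero n] (lam : ℝ) : Set (V n) :=
  {x | x ∈ ball (0 : V n) 1 ∧ lam < x (lastIdx n)}

/-- The volume `|B^λ|`. -/
def BlVol (n : ℕ) [NeZero n] (lam : ℝ) : ℝ := (volume (Bl n lam)).toReal

/-- The optimal bubble `B^λ(v) = (v/|B^λ|)^{1/n} (B^λ - λ e_n)` of volume `v`. -/
def bubble (n : ℕ) [NeZero n] (lam v : ℝ) : Set (V n) :=
  (fun x => (v / BlVol n lam) ^ ((1 : ℝ) / n) • (x - lam • eN n)) '' Bl n lam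

/-- The translated bubble `B^λ(v, y)`. -/
def bubbleAt (n : ℕ) [NeZero n] (lam v : ℝ) (y : V n) : Set (V n) :=
  (fun x => x + y) '' bubble n lam v

/-- The value `P_λ(B^λ(v)) = n |B^λ|^{1/n} v^{(n-1)/n}`. -/
def PlBub (n : ℕ) [NeZero n] (lam v : ℝ) : ℝ :=
  n * BlVol n lam ^ ((1 : ℝ) / n) * v ^ (((n : ℝ) - 1) / n)

/-- The isoperimetric deficit `D_λ`. -/
def deficit (n : ℕ) [NeZero n] (lam : ℝ) (E : Set (V n)) : ℝ :=
  (Pl n lam E - PlBub n lam (volume E).toReal) / PlBub n lam (volume E).toReal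

/-- The Fraenkel asymmetry `α_λ`. -/
def asym (n : ℕ) [NeZero n] (lam : ℝ) (E : Set (V n)) : ℝ :=
  ⨅ y : hyp n,
    (volume (E ∆ bubbleAt n lam (volume E).toReal (y : V n))).toReal / (volume E).toReal

end

/-! For `p ∈ B^λ`, minimize `u - ⟪p, ·⟫` over the compact set `closure E`. At a minimum point
in `E` the gradient of `u` is `p` and minimality is the supporting-hyperplane inequality, so the
point lies in `Γ_u`. A minimum point on `∂E` is impossible, by the first-order condition along a
direction pointing into `E`: on the curved part the inward normal gives
`1 = ∂u/∂ν ≤ ⟪p, ν⟫ < 1`; on the flat part, away from the curved part, `E` contains a half-ball,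
so `e_n` points into `E` and `λ < p_n ≤ ∂u/∂x_n = λ`; and at the corner the inward normal has
positive last coordinate, which contradicts orthogonality. -/

section Minimizer

variable {F : Type*} [NormedAddCommGroup F] [InnerProductSpace ℝ F] [CompleteSpace F]
  {u : F → ℝ} {s : Set F} {p x : F}

theorem hasFDerivAt_sub_inner (hu : DifferentiableAt ℝ u x) :
    HasFDerivAt (fun y => u y - ⟪p, y⟫) (InnerProductSpace.toDual ℝ F (gradient u x - p)) x := by
  rw [map_sub]
  exact hu.hasGradientAt.hasFDerivAt.sub (InnerProductSpace.toDual ℝ F p).hasFDerivAt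

theorem IsMinOn.inner_le_inner_gradient (hmin : IsMinOn (fun y => u y - ⟪p, y⟫) s x)
    (hu : DifferentiableAt ℝ u x) {v : F} (hv : ∀ᶠ t in 𝓝[>] (0 : ℝ), x + t • v ∈ s) :
    ⟪p, v⟫ ≤ ⟪gradient u x, v⟫ := by
  have h := hmin.localize.hasFDerivWithinAt_nonneg (hasFDerivAt_sub_inner hu).hasFDerivWithinAt
    (mem_posTangentConeAt_of_frequently_mem hv.frequently)
  rw [InnerProductSpace.toDual_apply_apply, inner_sub_left] at h
  linarith

theorem IsMinOn.inner_gradient_le_inner_of_eventually_sub_smul_mem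
    (hmin : IsMinOn (fun y => u y - ⟪p, y⟫) s x) (hu : DifferentiableAt ℝ u x) {v : F}
    (hv : ∀ᶠ t in 𝓝[>] (0 : ℝ), x - t • v ∈ s) : ⟪gradient u x, v⟫ ≤ ⟪p, v⟫ := by
  have h := hmin.inner_le_inner_gradient hu (v := -v) (by simpa [← sub_eq_add_neg] using hv)
  rwa [inner_neg_right, inner_neg_right, neg_le_neg_iff] at h

theorem IsMinOn.gradient_eq (hmin : IsMinOn (fun y => u y - ⟪p, y⟫) s x)
    (hu : DifferentiableAt ℝ u x) (hs : s ∈ 𝓝 x) : gradient u x = p := by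
  have h := (hmin.isLocalMin hs).hasFDerivAt_eq_zero (hasFDerivAt_sub_inner hu)
  rwa [LinearIsometryEquiv.map_eq_zero_iff, sub_eq_zero] at h

theorem IsMinOn.add_inner_gradient_sub_le (hmin : IsMinOn (fun y => u y - ⟪p, y⟫) s x)
    (hu : DifferentiableAt ℝ u x) (hs : s ∈ 𝓝 x) {y : F} (hy : y ∈ s) :
    u x + ⟪gradient u x, y - x⟫ ≤ u y := by
  have h : u x - ⟪p, x⟫ ≤ u y - ⟪p, y⟫ := hmin hy
  rw [hmin.gradient_eq hu hs, inner_sub_right]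
  linarith

end Minimizer

section HalfSpace

variable {n : ℕ} [NeZero n] {E : Set (V n)} {x : V n}

theorem inner_eN (x : V n) : ⟪x, eN n⟫ = x (lastIdx n) := by
  simp [eN, EuclideanSpace.inner_single_right]

theorem norm_eN : ‖eN n‖ = 1 := by
  simp [eN]

theorem convex_upperHalf : Convex ℝ (upperHalf n) :=
  convex_halfSpace_gt (EuclideanSpace.proj (lastIdx n) : V n →L[ℝ] ℝ).isLinear 0

theorem nonneg_lastIdx_of_mem_closure (hE : E ⊆ upperHalf n) (hx : x ∈ closure E) :
    0 ≤ x (lastIdx n) :=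
  closure_minimal (fun _ hy => (hE hy).le)
    (isClosed_le continuous_const (EuclideanSpace.proj (lastIdx n)).continuous) hx

theorem lastIdx_neg_of_eventually_sub_smul_mem (hx : x ∈ hyp n) (hE : E ⊆ upperHalf n)
    {v : V n} (hv : ∀ᶠ t in 𝓝[>] (0 : ℝ), x - t • v ∈ E) : v (lastIdx n) < 0 := by
  obtain ⟨t, htE, ht⟩ := (hv.and self_mem_nhdsWithin).exists
  have h : 0 < x (lastIdx n) - t * v (lastIdx n) := hE htE
  rw [show x (lastIdx n) = 0 from hx, zero_sub, neg_pos] at h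
  exact neg_of_mul_neg_right h ht.le

theorem exists_ball_inter_upperHalf_subset (hEopen : IsOpen E) (hE : E ⊆ upperHalf n)
    (hx : x ∈ closure E) (hx' : x ∉ closure (frontier E ∩ upperHalf n)) :
    ∃ r > 0, ball x r ∩ upperHalf n ⊆ E := by
  simp only [Metric.mem_closure_iff, not_forall, not_exists, not_and, not_lt] at hx'
  obtain ⟨r, hr, hfar⟩ := hx'
  refine ⟨r, hr, ((convex_ball x r).inter convex_upperHalf).isPreconnected
    |>.subset_of_closure_inter_subset hEopen ?_ ?_⟩
  · obtain ⟨y, hyE, hy⟩ := Metric.mem_closure_iff.1 hx r hr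
    exact ⟨y, ⟨mem_ball_comm.1 hy, hE hyE⟩, hyE⟩
  · rintro y ⟨hy, hyr, hyup⟩
    by_contra hyE
    have hyfr : y ∈ frontier E := ⟨hy, by rwa [hEopen.interior_eq]⟩
    exact (hfar y ⟨hyfr, hyup⟩).not_gt (mem_ball_comm.1 hyr)

theorem eventually_add_smul_eN_mem (hEopen : IsOpen E) (hE : E ⊆ upperHalf n)
    (hx : x ∈ closure E) (hx' : x ∉ closure (frontier E ∩ upperHalf n)) :
    ∀ᶠ t in 𝓝[>] (0 : ℝ), x + t • eN n ∈ E := by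
  obtain ⟨r, hr, hball⟩ := exists_ball_inter_upperHalf_subset hEopen hE hx hx'
  filter_upwards [Ioo_mem_nhdsGT hr] with t ht
  refine hball ⟨?_, ?_⟩
  · simpa [norm_smul, norm_eN, abs_of_pos ht.1] using ht.2
  · show 0 < (x + t • eN n) (lastIdx n)
    have h : (x + t • eN n) (lastIdx n) = x (lastIdx n) + t := by simp [eN]
    linarith [nonneg_lastIdx_of_mem_closure hE hx, ht.1]

theorem IsMinOn.lastIdx_le_inner_gradient_eN {u : V n → ℝ} {p : V n}
    (hmin : IsMinOn (fun y => u y - ⟪p, y⟫) (closure E) x) (hu : DifferentiableAt ℝ u x)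
    (hEopen : IsOpen E) (hE : E ⊆ upperHalf n) (hx : x ∈ closure E)
    (hx' : x ∉ closure (frontier E ∩ upperHalf n)) :
    p (lastIdx n) ≤ ⟪gradient u x, eN n⟫ := by
  rw [← inner_eN]
  exact hmin.inner_le_inner_gradient hu
    ((eventually_add_smul_eN_mem hEopen hE hx hx').mono fun _ h => subset_closure h)

end HalfSpace

theorem abp_contact_set_inclusion_general (n : ℕ) [NeZero n]
    (lam : ℝ)
    (E : Set (V n)) (hEopen : IsOpen E) (hEconn : IsConnected E)
    (hEbdd : Bornology.IsBounded E) (hEsub : E ⊆ upperHalf n)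
    (u : V n → ℝ) (ν : V n → V n)
    -- `u ∈ C¹(closure E)`
    (hudiff : ∀ x ∈ closure E, DifferentiableAt ℝ u x)
    -- `ν` is the outward unit normal of `E` along its boundary
    (hν : ∀ x ∈ frontier E, ‖ν x‖ = 1 ∧
      ∃ ε > 0, ∀ t ∈ Set.Ioo (0 : ℝ) ε, x + t • ν x ∉ closure E ∧ x - t • ν x ∈ E)
    -- the relative boundary meets `{x_n = 0}` orthogonally
    (horth : ∀ x ∈ closure (frontier E ∩ upperHalf n) ∩ hyp n, ⟪ν x, eN n⟫ = 0)
    -- `∂u/∂ν = 1` on `∂E ∩ {x_n > 0}`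
    (hneu₁ : ∀ x ∈ frontier E ∩ upperHalf n, ⟪gradient u x, ν x⟫ = 1)
    -- `∂u/∂ν = -λ` on `∂E ∩ {x_n = 0}` (the outer normal there being `-e_n`)
    (hneu₂ : ∀ x ∈ frontier E ∩ hyp n, ⟪gradient u x, -eN n⟫ = -lam) :
    Bl n lam ⊆ gradient u ''
      {x ∈ E | ∀ y ∈ closure E, u x + ⟪gradient u x, y - x⟫ ≤ u y} := by
  rintro p ⟨hp, hlamp⟩
  have hucont : ContinuousOn u (closure E) :=
    fun x hx => (hudiff x hx).continuousAt.continuousWithinAt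
  obtain ⟨x, hxE, hmin⟩ := hEbdd.isCompact_closure.exists_isMinOn hEconn.nonempty.closure
    (hucont.sub (continuous_const.inner continuous_id :
      Continuous fun y : V n => ⟪p, y⟫).continuousOn)
  have hx : x ∈ E := by
    by_contra hx
    have hfr : x ∈ frontier E := ⟨hxE, by rwa [hEopen.interior_eq]⟩
    obtain ⟨hνx, ε, hε, hνε⟩ := hν x hfr
    have hinward : ∀ᶠ t in 𝓝[>] (0 : ℝ), x - t • ν x ∈ E := by
      filter_upwards [Ioo_mem_nhdsGT hε] with t ht using (hνε t ht).2
    rcases (nonneg_lastIdx_of_mem_closure hEsub hxE).lt_or_eq with hpos | hzero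
    · have hle := hmin.inner_gradient_le_inner_of_eventually_sub_smul_mem (hudiff x hxE)
        (hinward.mono fun _ h => subset_closure h)
      have hpν : ⟪p, ν x⟫ ≤ ‖p‖ := (real_inner_le_norm p (ν x)).trans_eq (by rw [hνx, mul_one])
      linarith [hneu₁ x ⟨hfr, hpos⟩, mem_ball_zero_iff.1 hp]
    have hxhyp : x ∈ hyp n := hzero.symm
    by_cases hcorner : x ∈ closure (frontier E ∩ upperHalf n)
    · have hνn := lastIdx_neg_of_eventually_sub_smul_mem hxhyp hEsub hinward
      have h0 := horth x ⟨hcorner, hxhyp⟩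
      rw [inner_eN] at h0
      linarith
    · have hle := hmin.lastIdx_le_inner_gradient_eN (hudiff x hxE) hEopen hEsub hxE hcorner
      have hlamx := hneu₂ x ⟨hfr, hxhyp⟩
      rw [inner_neg_right, neg_inj] at hlamx
      linarith
  have hnhds : closure E ∈ 𝓝 x := mem_of_superset (hEopen.mem_nhds hx) subset_closure
  exact ⟨x, ⟨hx, fun y hy => hmin.add_inner_gradient_sub_le (hudiff x hxE) hnhds hy⟩,
    hmin.gradient_eq (hudiff x hxE) hnhds⟩

/-- (ABP lower contact set inclusion) If `E ⊆ {x_n > 0}` is a bounded connected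
open set whose relative boundary is smooth and meets `{x_n = 0}` orthogonally, and
`u ∈ C¹(closure E) ∩ C^∞(E)` solves the Neumann problem `Δu = P_λ(E)/|E|` in `E`,
`∂u/∂ν = 1` on `∂E ∩ {x_n > 0}`, `∂u/∂ν = -λ` on `∂E ∩ {x_n = 0}`,
then `B^λ ⊆ ∇u(Γ_u)` where `Γ_u` is the lower contact set of `u`. -/
theorem abp_contact_set_inclusion (n : ℕ) [NeZero n] (hn : 2 ≤ n)
    (lam : ℝ) (hlam : lam ∈ Set.Ioo (-1 : ℝ) 1)
    (E : Set (V n)) (hEopen : IsOpen E) (hEconn : IsConnected E)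
    (hEbdd : Bornology.IsBounded E) (hEsub : E ⊆ upperHalf n)
    (u : V n → ℝ) (ν : V n → V n)
    -- `u ∈ C^∞(E)`
    (husmooth : ∀ k : ℕ, ContDiffOn ℝ k u E)
    -- `u ∈ C¹(closure E)`
    (hudiff : ∀ x ∈ closure E, DifferentiableAt ℝ u x)
    (hugrad : ContinuousOn (gradient u) (closure E))
    -- `ν` is the outward unit normal of `E` along its boundary
    (hν : ∀ x ∈ frontier E, ‖ν x‖ = 1 ∧
      ∃ ε > 0, ∀ t ∈ Set.Ioo (0 : ℝ) ε, x + t • ν x ∉ closure E ∧ x - t • ν x ∈ E)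
    -- the relative boundary meets `{x_n = 0}` orthogonally
    (horth : ∀ x ∈ closure (frontier E ∩ upperHalf n) ∩ hyp n, ⟪ν x, eN n⟫ = 0)
    -- `Δ u = P_λ(E)/|E|` in `E`
    (hpde : ∀ x ∈ E, vdiv (gradient u) x = Pl n lam E / (volume E).toReal)
    -- `∂u/∂ν = 1` on `∂E ∩ {x_n > 0}`
    (hneu₁ : ∀ x ∈ frontier E ∩ upperHalf n, ⟪gradient u x, ν x⟫ = 1)
    -- `∂u/∂ν = -λ` on `∂E ∩ {x_n = 0}` (the outer normal there being `-e_n`)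
    (hneu₂ : ∀ x ∈ frontier E ∩ hyp n, ⟪gradient u x, -eN n⟫ = -lam) :
    Bl n lam ⊆ gradient u ''
      {x ∈ E | ∀ y ∈ closure E, u x + ⟪gradient u x, y - x⟫ ≤ u y} :=
  abp_contact_set_inclusion_general n lam E hEopen hEconn hEbdd hEsub u ν hudiff hν horth hneu₁
    hneu₂
end

section
/- (One-dimensional truncation estimate) Set r_λ = min{√(1-λ²), 1-λ} and R_λ = max{√(1-λ²), 1-λ}. There exists ĉ = ĉ(n,λ) > 0 such that for every 1-dimensional set of locally finite perimeter E ⊂ [0,∞) with |E| < ∞ and every l with (7/8) r_λ ≤ l ≤ (9/8) R_λ, one has ∫_{E Δ [0,l]} t^{n-1} dt ≤ ĉ ( ∫_{[0, r_λ/2] \ E} t^{n-1} dt + ∫_{∂*E} t^{n-1} |l - t| dH⁰(t) ). -/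
open MeasureTheory Metric Set Filter Topology
open scoped ENNReal NNReal RealInnerProductSpace symmDiff

/-- The essential (reduced) boundary of a one-dimensional set. -/
def redBdry1 (E : Set ℝ) : Set ℝ :=
  {x | ¬ Tendsto (fun r : ℝ => volume (E ∩ ball x r) / volume (ball x r))
        (nhdsWithin (0 : ℝ) (Set.Ioi 0)) (nhds (0 : ℝ≥0∞)) ∧
      ¬ Tendsto (fun r : ℝ => volume (E ∩ ball x r) / volume (ball x r))
        (nhdsWithin (0 : ℝ) (Set.Ioi 0)) (nhds (1 : ℝ≥0∞))}

/-!
On an interval free of essential boundary points a one-dimensional set is almost empty or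
almost full: otherwise `F(x) = |E ∩ (a, x]|` minus its secant has an interior extremum `x`,
and there the density of `E` in `(x - r, x + r)` stays between `θ/2` and `(1 + θ)/2`, where
`θ` is the average density of `E` on `(a, b]`.

Beyond `l`, `E` is therefore almost contained in `(l, u]` for its last boundary point `u`,
which costs `u^{n-1} (u - l)`. Below `l`, let `u` be the first boundary point after `r_λ/4`
(or `l` if there is none). If `u ≤ r_λ/2`, the boundary term is bounded below. Otherwise `E` is
almost empty on `(r_λ/4, r_λ/2)`, and the deficit near `0` is bounded below, or almost full on
`(r_λ/4, u)`, and the missing part `(u, l]` is paid for by the boundary point `u`.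
-/

lemma exists_first_mem_or_eq {α : Type*} [LinearOrder α] {S : Set α} {a b : α} (hab : a < b)
    (hS : (S ∩ Ioc a b).Finite) : ∃ u ∈ Ioc a b, Disjoint (Ioo a u) S ∧ (u = b ∨ u ∈ S) := by
  rcases (S ∩ Ioc a b).eq_empty_or_nonempty with h | h
  · refine ⟨b, ⟨hab, le_rfl⟩, disjoint_left.2 fun x hx hxS => ?_, Or.inl rfl⟩
    exact h.subset ⟨hxS, hx.1, hx.2.le⟩
  · obtain ⟨u, ⟨huS, hu⟩, hmin⟩ := exists_min_image _ id hS h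
    refine ⟨u, hu, disjoint_left.2 fun x hx hxS => ?_, Or.inr huS⟩
    exact (hmin x ⟨hxS, hx.1, hx.2.le.trans hu.2⟩).not_gt hx.2

lemma exists_last_mem_or_eq {α : Type*} [LinearOrder α] {S : Set α} {a : α}
    (hS : (S ∩ Ioi a).Finite) : ∃ u, a ≤ u ∧ Disjoint (Ioi u) S ∧ (u = a ∨ u ∈ S) := by
  rcases (S ∩ Ioi a).eq_empty_or_nonempty with h | h
  · refine ⟨a, le_rfl, disjoint_left.2 fun x hx hxS => ?_, Or.inl rfl⟩
    exact h.subset ⟨hxS, hx⟩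
  · obtain ⟨u, ⟨huS, hu⟩, hmax⟩ := exists_max_image _ id hS h
    refine ⟨u, hu.le, disjoint_left.2 fun x hx hxS => ?_, Or.inr huS⟩
    exact (hmax x ⟨hxS, hu.trans hx⟩).not_gt hx

lemma mem_redBdry1_of_eventually_bounds {E : Set ℝ} {x c₁ c₂ : ℝ} (hc₁ : 0 < c₁) (hc₂ : c₂ < 1)
    (h : ∀ᶠ r in 𝓝[>] 0, ENNReal.ofReal c₁ ≤ volume (E ∩ ball x r) / volume (ball x r) ∧
      volume (E ∩ ball x r) / volume (ball x r) ≤ ENNReal.ofReal c₂) :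
    x ∈ redBdry1 E := by
  refine ⟨fun h₀ => ?_, fun h₁ => ?_⟩
  · obtain ⟨r, hr, hr₀⟩ := (h.and (h₀.eventually_lt_const (ENNReal.ofReal_pos.2 hc₁))).exists
    exact hr₀.not_ge hr.1
  · obtain ⟨r, hr, hr₁⟩ :=
      (h.and (h₁.eventually_const_lt (ENNReal.ofReal_lt_one.2 hc₂))).exists
    exact hr₁.not_ge hr.2

lemma exists_symmetric_increment_bounds {F : ℝ → ℝ} {a b θ : ℝ} (hab : a < b)
    (hF : ∀ x y, a ≤ x → x ≤ y → y ≤ b → 0 ≤ F y - F x ∧ F y - F x ≤ y - x)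
    (hθ : F b - F a = θ * (b - a)) :
    ∃ x ∈ Ioo a b, ∀ᶠ r in 𝓝[>] 0,
      θ * r ≤ F (x + r) - F (x - r) ∧ F (x + r) - F (x - r) ≤ (1 + θ) * r := by
  have hFc : ContinuousOn F (Icc a b) := by
    refine (LipschitzOnWith.of_dist_le_mul (K := 1) fun x hx y hy => ?_).continuousOn
    rw [NNReal.coe_one, one_mul, Real.dist_eq, Real.dist_eq]
    rcases le_total x y with hxy | hyx
    · have := hF x y hx.1 hxy hy.2
      rw [abs_sub_comm, abs_of_nonneg this.1, abs_of_nonpos (by linarith)]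
      linarith
    · have := hF y x hy.1 hyx hx.2
      rw [abs_of_nonneg this.1, abs_of_nonneg (by linarith)]
      exact this.2
  obtain ⟨x, hx, hext⟩ := exists_Ioo_extr_on_Icc (f := fun x => F x - θ * x) hab
    (hFc.sub (continuous_const.mul continuous_id).continuousOn) (by linarith)
  refine ⟨x, hx, ?_⟩
  filter_upwards [Ioo_mem_nhdsGT (lt_min (sub_pos.2 hx.1) (sub_pos.2 hx.2))] with r hr
  have hr₁ := hr.2.trans_le (min_le_left _ _)
  have hr₂ := hr.2.trans_le (min_le_right _ _)
  have hleft := hF (x - r) x (by linarith) (by linarith [hr.1]) hx.2.le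
  have hright := hF x (x + r) hx.1.le (by linarith [hr.1]) (by linarith)
  have hmem₁ : x - r ∈ Icc a b := ⟨by linarith, by linarith [hr.1]⟩
  have hmem₂ : x + r ∈ Icc a b := ⟨by linarith [hr.1], by linarith⟩
  rcases hext with hmin | hmax
  · have h₁ : F x - θ * x ≤ F (x - r) - θ * (x - r) := hmin hmem₁
    have h₂ : F x - θ * x ≤ F (x + r) - θ * (x + r) := hmin hmem₂
    constructor <;> linarith
  · have h₁ : F (x - r) - θ * (x - r) ≤ F x - θ * x := hmax hmem₁
    have h₂ : F (x + r) - θ * (x + r) ≤ F x - θ * x := hmax hmem₂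
    constructor <;> linarith

lemma measureReal_inter_Ioc_sub {E : Set ℝ} (hE : MeasurableSet E) {a x y : ℝ} (hax : a ≤ x)
    (hxy : x ≤ y) :
    volume.real (E ∩ Ioc a y) - volume.real (E ∩ Ioc a x) = volume.real (E ∩ Ioc x y) := by
  rw [← Ioc_union_Ioc_eq_Ioc hax hxy, inter_union_distrib_left,
    measureReal_union ((Ioc_disjoint_Ioc_of_le le_rfl).mono inter_subset_right
      inter_subset_right) (hE.inter measurableSet_Ioc)
      (measure_inter_lt_top_of_right_ne_top measure_Ioc_lt_top.ne).ne
      (measure_inter_lt_top_of_right_ne_top measure_Ioc_lt_top.ne).ne]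
  ring

lemma null_or_conull_of_disjoint_redBdry1 {E : Set ℝ} (hE : MeasurableSet E) {a b : ℝ}
    (hab : a < b) (hdisj : Disjoint (Ioo a b) (redBdry1 E)) :
    volume (E ∩ Ioc a b) = 0 ∨ volume (Ioc a b \ E) = 0 := by
  by_contra! hne
  set F : ℝ → ℝ := fun x => volume.real (E ∩ Ioc a x)
  have hincr : ∀ x y, a ≤ x → x ≤ y → F y - F x = volume.real (E ∩ Ioc x y) :=
    fun x y => measureReal_inter_Ioc_sub hE
  have hF : ∀ x y, a ≤ x → x ≤ y → y ≤ b → 0 ≤ F y - F x ∧ F y - F x ≤ y - x := by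
    intro x y hax hxy _
    rw [hincr x y hax hxy, ← Real.volume_real_Ioc_of_le hxy]
    exact ⟨measureReal_nonneg, measureReal_mono inter_subset_right measure_Ioc_lt_top.ne⟩
  have hFb : F b < b - a := by
    have hsplit := measure_inter_add_sdiff (μ := volume) (Ioc a b) hE
    rw [inter_comm, Real.volume_Ioc] at hsplit
    have hfin : volume (E ∩ Ioc a b) ≠ ⊤ := ne_top_of_le_ne_top ENNReal.ofReal_ne_top
      (hsplit ▸ le_self_add)
    show (volume (E ∩ Ioc a b)).toReal < b - a
    rw [← ENNReal.ofReal_lt_ofReal_iff (sub_pos.2 hab), ENNReal.ofReal_toReal hfin, ← hsplit]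
    exact ENNReal.lt_add_right hfin hne.2
  set θ := F b / (b - a)
  have hθ₀ : 0 < θ := div_pos (ENNReal.toReal_pos hne.1
    (measure_inter_lt_top_of_right_ne_top measure_Ioc_lt_top.ne).ne) (sub_pos.2 hab)
  have hθ₁ : θ < 1 := (div_lt_one (sub_pos.2 hab)).2 hFb
  have hFa : F a = 0 := by simp [F]
  obtain ⟨x, hx, hev⟩ := exists_symmetric_increment_bounds hab hF (by
    rw [hFa, sub_zero, div_mul_cancel₀ _ (sub_pos.2 hab).ne'])
  refine hdisj.ne_of_mem hx (mem_redBdry1_of_eventually_bounds (c₁ := θ / 2)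
    (c₂ := (1 + θ) / 2) (by positivity) (by linarith) ?_) rfl
  filter_upwards [hev, self_mem_nhdsWithin, Ioo_mem_nhdsGT (sub_pos.2 hx.1)]
    with r ⟨hlow, hup⟩ (hr : 0 < r) hra
  have hball : volume (E ∩ ball x r) = ENNReal.ofReal (F (x + r) - F (x - r)) := by
    rw [hincr _ _ (by linarith [hra.2]) (by linarith), Real.ball_eq_Ioo,
      measure_congr (ae_eq_set_inter (ae_eq_refl E) Ioo_ae_eq_Ioc),
      ofReal_measureReal (measure_inter_lt_top_of_right_ne_top measure_Ioc_lt_top.ne).ne]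
  rw [hball, Real.volume_ball, ← ENNReal.ofReal_div_of_pos (by positivity)]
  constructor <;> apply ENNReal.ofReal_le_ofReal
  · rw [le_div_iff₀ (by positivity)]; linarith
  · rw [div_le_iff₀ (by positivity)]; linarith

lemma volume_inter_Ioi_eq_zero_of_disjoint_redBdry1 {E : Set ℝ} (hE : MeasurableSet E)
    (hfin : volume E ≠ ⊤) {a : ℝ} (hdisj : Disjoint (Ioi a) (redBdry1 E)) :
    volume (E ∩ Ioi a) = 0 := by
  have hnull : ∀ M, volume.real E < M - a → volume (E ∩ Ioc a M) = 0 := by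
    intro M hM
    have hvol : 0 ≤ volume.real E := measureReal_nonneg
    refine (null_or_conull_of_disjoint_redBdry1 hE (by linarith)
      (hdisj.mono_left Ioo_subset_Ioi_self)).resolve_right fun hfull => ?_
    have hle : volume (Ioc a M) ≤ volume E := by
      rw [← measure_inter_add_sdiff (Ioc a M) hE, hfull, add_zero]
      exact measure_mono inter_subset_right
    rw [Real.volume_Ioc] at hle
    exact hM.not_ge ((ENNReal.ofReal_le_iff_le_toReal hfin).1 hle)
  have hcover : E ∩ Ioi a ⊆ ⋃ k : ℕ, E ∩ Ioc a (a + volume.real E + 1 + k) := by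
    rintro t ⟨htE, hta⟩
    obtain ⟨k, hk⟩ := exists_nat_ge (t - a - volume.real E - 1)
    exact mem_iUnion.2 ⟨k, htE, hta, by linarith⟩
  exact measure_mono_null hcover
    (measure_iUnion_null fun k => hnull _ (by linarith [k.cast_nonneg (α := ℝ)]))

noncomputable def weightedVolume (p : ℕ) : Measure ℝ :=
  volume.withDensity fun t => ENNReal.ofReal (t ^ p)

lemma weightedVolume_apply (p : ℕ) (s : Set ℝ) :
    weightedVolume p s = ∫⁻ t in s, ENNReal.ofReal (t ^ p) :=
  withDensity_apply' _ s

lemma weightedVolume_absolutelyContinuous (p : ℕ) : weightedVolume p ≪ volume :=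
  withDensity_absolutelyContinuous _ _

lemma ofReal_pow_mul_volume_le_weightedVolume {p : ℕ} {a : ℝ} {s : Set ℝ} (ha : 0 ≤ a)
    (hs : MeasurableSet s) (hsa : s ⊆ Ici a) :
    ENNReal.ofReal (a ^ p) * volume s ≤ weightedVolume p s := by
  rw [weightedVolume_apply, ← setLIntegral_const]
  exact setLIntegral_mono' hs fun t ht => ENNReal.ofReal_le_ofReal (pow_le_pow_left₀ ha (hsa ht) p)

lemma weightedVolume_le_ofReal_pow_mul_volume {p : ℕ} {b : ℝ} {s : Set ℝ}
    (hs : MeasurableSet s) (hsb : s ⊆ Icc 0 b) :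
    weightedVolume p s ≤ ENNReal.ofReal (b ^ p) * volume s := by
  rw [weightedVolume_apply, ← setLIntegral_const]
  exact setLIntegral_mono' hs fun t ht =>
    ENNReal.ofReal_le_ofReal (pow_le_pow_left₀ (hsb ht).1 (hsb ht).2 p)

noncomputable def weightedBdryDist (p : ℕ) (E : Set ℝ) (l : ℝ) : ℝ≥0∞ :=
  ∫⁻ t in redBdry1 E, ENNReal.ofReal (t ^ p * |l - t|) ∂Measure.count

lemma ofReal_pow_mul_abs_le_weightedBdryDist {p : ℕ} {E : Set ℝ} {l u : ℝ}
    (hu : u = l ∨ u ∈ redBdry1 E) :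
    ENNReal.ofReal (u ^ p * |l - u|) ≤ weightedBdryDist p E l := by
  rcases hu with rfl | hu
  · simp
  · calc ENNReal.ofReal (u ^ p * |l - u|)
        = ∫⁻ t in {u}, ENNReal.ofReal (t ^ p * |l - t|) ∂Measure.count := by
          rw [lintegral_singleton, Measure.count_singleton, mul_one]
      _ ≤ weightedBdryDist p E l := lintegral_mono_set (singleton_subset_iff.2 hu)

/-- Local finiteness of `∂*E` makes infinitely many boundary points beyond `l` escape to
infinity, where each of them carries weight at least `1`. -/
lemma weightedBdryDist_eq_top {p : ℕ} {E : Set ℝ} {l : ℝ} (hl : 0 ≤ l)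
    (hreg : ∀ R, (redBdry1 E ∩ Icc 0 R).Finite) (hS : (redBdry1 E ∩ Ioi l).Infinite) :
    weightedBdryDist p E l = ⊤ := by
  have hT : (redBdry1 E ∩ Ioi (l + 1)).Infinite := fun hT => hS <|
    ((hreg (l + 1)).union hT).subset fun t ⟨htE, hlt⟩ =>
      (le_or_gt t (l + 1)).imp (fun h => ⟨htE, hl.trans hlt.le, h⟩) fun h => ⟨htE, h⟩
  refine ENNReal.eq_top_of_forall_nnreal_le fun r => ?_
  obtain ⟨F, hFT, hcard⟩ := hT.exists_subset_card_eq ⌈r⌉₊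
  have hone : ∀ t ∈ F, 1 ≤ ENNReal.ofReal (t ^ p * |l - t|) * Measure.count {t} := by
    intro t ht
    have hlt : l + 1 < t := (hFT ht).2
    rw [Measure.count_singleton, mul_one, ENNReal.one_le_ofReal, abs_sub_comm,
      abs_of_pos (by linarith)]
    exact one_le_mul_of_one_le_of_one_le (one_le_pow₀ (by linarith)) (by linarith)
  calc (r : ℝ≥0∞) ≤ ∑ _t ∈ F, 1 := by
        rw [Finset.sum_const, nsmul_one, hcard]
        exact_mod_cast Nat.le_ceil r
    _ ≤ ∑ t ∈ F, ENNReal.ofReal (t ^ p * |l - t|) * Measure.count {t} := Finset.sum_le_sum hone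
    _ = ∫⁻ t in ↑F, ENNReal.ofReal (t ^ p * |l - t|) ∂Measure.count := (lintegral_finset _ _).symm
    _ ≤ weightedBdryDist p E l := lintegral_mono_set (hFT.trans inter_subset_left)

lemma weightedVolume_inter_Ioi_le_weightedBdryDist (p : ℕ) {E : Set ℝ} (hE : MeasurableSet E)
    (hfin : volume E ≠ ⊤) {l : ℝ} (hl : 0 ≤ l) (hS : (redBdry1 E ∩ Ioi l).Finite) :
    weightedVolume p (E ∩ Ioi l) ≤ weightedBdryDist p E l := by
  obtain ⟨u, hlu, hdisj, hu⟩ := exists_last_mem_or_eq hS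
  have htail : weightedVolume p (E ∩ Ioi u) = 0 := weightedVolume_absolutelyContinuous p
    (volume_inter_Ioi_eq_zero_of_disjoint_redBdry1 hE hfin hdisj)
  calc weightedVolume p (E ∩ Ioi l) ≤ weightedVolume p (Ioc l u ∪ E ∩ Ioi u) :=
        measure_mono fun t ⟨htE, ht⟩ => (le_or_gt t u).imp (fun h => ⟨ht, h⟩) fun h => ⟨htE, h⟩
    _ ≤ ENNReal.ofReal (u ^ p) * volume (Ioc l u) + 0 :=
        (measure_union_le _ _).trans <| add_le_add (weightedVolume_le_ofReal_pow_mul_volume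
          measurableSet_Ioc fun t ht => ⟨hl.trans ht.1.le, ht.2⟩) htail.le
    _ = ENNReal.ofReal (u ^ p * |l - u|) := by
        rw [add_zero, Real.volume_Ioc, ← ENNReal.ofReal_mul (pow_nonneg (hl.trans hlu) p),
          abs_sub_comm, abs_of_nonneg (sub_nonneg.2 hlu)]
    _ ≤ weightedBdryDist p E l := ofReal_pow_mul_abs_le_weightedBdryDist hu

lemma ofReal_pow_mul_le_weightedVolume_Ioc_diff {p : ℕ} {E : Set ℝ} {a b : ℝ} (ha : 0 ≤ a)
    (hempty : volume (E ∩ Ioc a b) = 0) :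
    ENNReal.ofReal (a ^ p * (b - a)) ≤ weightedVolume p (Ioc a b \ E) := by
  rw [ENNReal.ofReal_mul (pow_nonneg ha p), ← Real.volume_Ioc, measure_sdiff_null' <|
    weightedVolume_absolutelyContinuous p <| inter_comm E _ ▸ hempty]
  exact ofReal_pow_mul_volume_le_weightedVolume ha measurableSet_Ioc fun t ht => ht.1.le

lemma weightedVolume_Icc_diff_le_of_volume_Ioc_diff_eq_zero {p : ℕ} {E : Set ℝ} {a m u l : ℝ}
    (ham : a ≤ m) (hul : u ≤ l) (hu : u = l ∨ u ∈ redBdry1 E) (hu₀ : 0 < u)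
    (hfull : volume (Ioc a u \ E) = 0) :
    weightedVolume p (Icc 0 l \ E) ≤
      weightedVolume p (Icc 0 m \ E) + ENNReal.ofReal ((l / u) ^ p) * weightedBdryDist p E l := by
  have hcover : Icc 0 l \ E ⊆ (Icc 0 m \ E ∪ Ioc a u \ E) ∪ Ioc u l := by
    rintro t ⟨ht, htE⟩
    rcases le_or_gt t m with htm | htm
    · exact Or.inl (Or.inl ⟨⟨ht.1, htm⟩, htE⟩)
    rcases le_or_gt t u with htu | htu
    · exact Or.inl (Or.inr ⟨⟨by linarith, htu⟩, htE⟩)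
    · exact Or.inr ⟨htu, ht.2⟩
  have hbdry := ofReal_pow_mul_abs_le_weightedBdryDist (p := p) hu
  rw [abs_of_nonneg (sub_nonneg.2 hul)] at hbdry
  calc weightedVolume p (Icc 0 l \ E)
      ≤ weightedVolume p (Icc 0 m \ E) + weightedVolume p (Ioc a u \ E) +
          weightedVolume p (Ioc u l) :=
        (measure_mono hcover).trans <| (measure_union_le _ _).trans <|
          add_le_add_left (measure_union_le _ _) _
    _ ≤ weightedVolume p (Icc 0 m \ E) + 0 + ENNReal.ofReal (l ^ p) * volume (Ioc u l) := by
        rw [weightedVolume_absolutelyContinuous p hfull]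
        gcongr
        exact weightedVolume_le_ofReal_pow_mul_volume measurableSet_Ioc
          fun t ht => ⟨by linarith [ht.1], ht.2⟩
    _ = weightedVolume p (Icc 0 m \ E) + ENNReal.ofReal ((l / u) ^ p) *
          ENNReal.ofReal (u ^ p * (l - u)) := by
        rw [add_zero, Real.volume_Ioc, ← ENNReal.ofReal_mul (pow_nonneg (by linarith) p),
          ← ENNReal.ofReal_mul (pow_nonneg (div_nonneg (by linarith) hu₀.le) p), ← mul_assoc,
          ← mul_pow, div_mul_cancel₀ l hu₀.ne']
    _ ≤ _ := by gcongr

lemma exists_weightedVolume_Icc_diff_le (p : ℕ) {m l₀ L : ℝ} (hm : 0 < m) (hml₀ : m < l₀) :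
    ∃ c : ℝ≥0∞, c ≠ ⊤ ∧ ∀ E : Set ℝ, MeasurableSet E → (∀ R, (redBdry1 E ∩ Icc 0 R).Finite) →
      ∀ l, l₀ ≤ l → l ≤ L → weightedVolume p (Icc 0 l \ E) ≤
        c * (weightedVolume p (Icc 0 m \ E) + weightedBdryDist p E l) := by
  set K := weightedVolume p (Icc 0 L)
  set δ := ENNReal.ofReal ((m / 2) ^ p * min (m / 2) (l₀ - m))
  set C := ENNReal.ofReal ((L / m) ^ p)
  have hK : K ≠ ⊤ := ne_top_of_le_ne_top (ENNReal.mul_ne_top ENNReal.ofReal_ne_top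
      measure_Icc_lt_top.ne)
    (weightedVolume_le_ofReal_pow_mul_volume measurableSet_Icc subset_rfl)
  have hδ : δ ≠ 0 := (ENNReal.ofReal_pos.2 (mul_pos (by positivity)
    (lt_min (by positivity) (sub_pos.2 hml₀)))).ne'
  refine ⟨K / δ + 1 + C, by finiteness, fun E hE hreg l hl₀ hlL => ?_⟩
  set T := weightedVolume p (Icc 0 m \ E) + weightedBdryDist p E l
  have hml : m < l := hml₀.trans_le hl₀
  have hlarge : δ ≤ T → weightedVolume p (Icc 0 l \ E) ≤ (K / δ + 1 + C) * T := fun hδT =>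
    calc weightedVolume p (Icc 0 l \ E) ≤ K :=
          measure_mono (sdiff_subset.trans (Icc_subset_Icc_right hlL))
      _ = K / δ * δ := (ENNReal.div_mul_cancel hδ ENNReal.ofReal_ne_top).symm
      _ ≤ (K / δ + 1 + C) * T := by gcongr; rw [add_assoc]; exact le_self_add
  obtain ⟨u, hu, hdisj, hub⟩ := exists_first_mem_or_eq (S := redBdry1 E) (by linarith : m / 2 < l)
    ((hreg l).subset fun t ⟨htE, ht⟩ => ⟨htE, by linarith [ht.1], ht.2⟩)
  rcases le_or_gt u m with hum | hmu
  · -- a boundary point in `(m/2, m]` lies at distance at least `l₀ - m` from `l`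
    refine hlarge (le_add_left ((ENNReal.ofReal_le_ofReal ?_).trans
      (ofReal_pow_mul_abs_le_weightedBdryDist hub)))
    rw [abs_of_nonneg (sub_nonneg.2 hu.2)]
    exact mul_le_mul (pow_le_pow_left₀ (by positivity) hu.1.le p)
      ((min_le_right _ _).trans (by linarith)) (le_min (by positivity) (by linarith))
      (pow_nonneg (by linarith [hu.1]) p)
  rcases null_or_conull_of_disjoint_redBdry1 hE hu.1 hdisj with hempty | hfull
  · refine hlarge (le_add_right ?_)
    calc δ ≤ ENNReal.ofReal ((m / 2) ^ p * (m - m / 2)) :=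
          ENNReal.ofReal_le_ofReal (mul_le_mul_of_nonneg_left
            (by linarith [min_le_left (m / 2) (l₀ - m)]) (by positivity))
      _ ≤ weightedVolume p (Ioc (m / 2) m \ E) :=
          ofReal_pow_mul_le_weightedVolume_Ioc_diff (by positivity) <|
            measure_mono_null (inter_subset_inter_right E (Ioc_subset_Ioc_right hmu.le)) hempty
      _ ≤ weightedVolume p (Icc 0 m \ E) := measure_mono <| sdiff_subset_sdiff_left <|
          Ioc_subset_Icc_self.trans (Icc_subset_Icc_left (by positivity))
  calc weightedVolume p (Icc 0 l \ E)
      ≤ weightedVolume p (Icc 0 m \ E) + ENNReal.ofReal ((l / u) ^ p) * weightedBdryDist p E l :=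
        weightedVolume_Icc_diff_le_of_volume_Ioc_diff_eq_zero (by linarith) hu.2 hub
          (by linarith) hfull
    _ ≤ (1 + C) * weightedVolume p (Icc 0 m \ E) + (1 + C) * weightedBdryDist p E l := by
        gcongr
        · exact le_mul_of_one_le_left' le_self_add
        · refine le_add_left (ENNReal.ofReal_le_ofReal ?_)
          exact pow_le_pow_left₀ (div_nonneg (by linarith) (by linarith))
            (div_le_div₀ (by linarith) hlL hm hmu.le) p
    _ ≤ (K / δ + 1 + C) * T := by rw [← mul_add, add_assoc]; exact mul_le_mul_left le_add_self _

theorem exists_weightedVolume_symmDiff_Icc_le (p : ℕ) {m l₀ L : ℝ} (hm : 0 < m)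
    (hml₀ : m < l₀) :
    ∃ c : ℝ, 0 < c ∧ ∀ E : Set ℝ, MeasurableSet E → E ⊆ Ici 0 → volume E ≠ ⊤ →
      (∀ R, (redBdry1 E ∩ Icc 0 R).Finite) → ∀ l, l₀ ≤ l → l ≤ L →
      weightedVolume p (E ∆ Icc 0 l) ≤
        ENNReal.ofReal c * (weightedVolume p (Icc 0 m \ E) + weightedBdryDist p E l) := by
  obtain ⟨c, hc, hnear⟩ := exists_weightedVolume_Icc_diff_le p (L := L) hm hml₀
  refine ⟨c.toReal + 1, by positivity, fun E hE hE₀ hfin hreg l hl₀ hlL => ?_⟩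
  have hl : 0 ≤ l := by linarith
  by_cases hS : (redBdry1 E ∩ Ioi l).Finite
  · have hsplit : E ∆ Icc 0 l ⊆ Icc 0 l \ E ∪ E ∩ Ioi l := by
      rintro t (⟨htE, ht⟩ | ht)
      · exact Or.inr ⟨htE, lt_of_not_ge fun htl => ht ⟨hE₀ htE, htl⟩⟩
      · exact Or.inl ht
    rw [ENNReal.ofReal_add ENNReal.toReal_nonneg zero_le_one, ENNReal.ofReal_toReal hc,
      ENNReal.ofReal_one, add_one_mul]
    exact (measure_mono hsplit).trans <| (measure_union_le _ _).trans <|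
      add_le_add (hnear E hE hreg l hl₀ hlL)
        ((weightedVolume_inter_Ioi_le_weightedBdryDist p hE hfin hl hS).trans le_add_self)
  · rw [weightedBdryDist_eq_top hl hreg hS, add_top,
      ENNReal.mul_top (ENNReal.ofReal_pos.2 (by positivity)).ne']
    exact le_top

theorem one_dimensional_truncation_estimate_general (n : ℕ)
    (lam : ℝ) (hlam : lam ∈ Set.Ioo (-1 : ℝ) 1) :
    ∃ c : ℝ, 0 < c ∧ ∀ E : Set ℝ, MeasurableSet E → E ⊆ Set.Ici (0 : ℝ) →
      volume E ≠ ⊤ →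
      -- `E` has locally finite perimeter in `(0,∞)`
      (∀ R : ℝ, (redBdry1 E ∩ Set.Icc 0 R).Finite) →
      ∀ l : ℝ, (7 / 8) * min (Real.sqrt (1 - lam ^ 2)) (1 - lam) ≤ l →
        l ≤ (9 / 8) * max (Real.sqrt (1 - lam ^ 2)) (1 - lam) →
        (∫⁻ t in E ∆ Set.Icc (0 : ℝ) l, ENNReal.ofReal (t ^ (n - 1)))
          ≤ ENNReal.ofReal c *
            ((∫⁻ t in Set.Icc (0 : ℝ) (min (Real.sqrt (1 - lam ^ 2)) (1 - lam) / 2) \ E,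
                ENNReal.ofReal (t ^ (n - 1)))
              + ∫⁻ t in redBdry1 E,
                  ENNReal.ofReal (t ^ (n - 1) * |l - t|) ∂Measure.count) := by
  obtain ⟨hlam₁, hlam₂⟩ := hlam
  have hr : 0 < min (Real.sqrt (1 - lam ^ 2)) (1 - lam) :=
    lt_min (Real.sqrt_pos.2 (by nlinarith)) (by linarith)
  obtain ⟨c, hc, hest⟩ := exists_weightedVolume_symmDiff_Icc_le (n - 1)
    (L := 9 / 8 * max (Real.sqrt (1 - lam ^ 2)) (1 - lam)) (half_pos hr)
    (by linarith : min (Real.sqrt (1 - lam ^ 2)) (1 - lam) / 2 <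
      7 / 8 * min (Real.sqrt (1 - lam ^ 2)) (1 - lam))
  refine ⟨c, hc, fun E hE hE₀ hfin hreg l hl₀ hlL => ?_⟩
  simpa only [weightedVolume_apply, weightedBdryDist] using hest E hE hE₀ hfin hreg l hl₀ hlL

/-- (One-dimensional truncation estimate) With
`r_λ = min{√(1-λ²), 1-λ}` and `R_λ = max{√(1-λ²), 1-λ}`, there is `ĉ = ĉ(n,λ) > 0` such that
for every one-dimensional set `E ⊆ [0,∞)` of locally finite perimeter with `|E| < ∞` and
every `l ∈ [(7/8) r_λ, (9/8) R_λ]`,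
`∫_{E Δ [0,l]} t^{n-1} dt ≤ ĉ ( ∫_{[0,r_λ/2] \ E} t^{n-1} dt + ∫_{∂*E} t^{n-1}|l-t| dH⁰ )`. -/
theorem one_dimensional_truncation_estimate (n : ℕ) (hn : 2 ≤ n)
    (lam : ℝ) (hlam : lam ∈ Set.Ioo (-1 : ℝ) 1) :
    ∃ c : ℝ, 0 < c ∧ ∀ E : Set ℝ, MeasurableSet E → E ⊆ Set.Ici (0 : ℝ) →
      volume E ≠ ⊤ →
      -- `E` has locally finite perimeter in `(0,∞)`
      (∀ R : ℝ, (redBdry1 E ∩ Set.Icc 0 R).Finite) →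
      ∀ l : ℝ, (7 / 8) * min (Real.sqrt (1 - lam ^ 2)) (1 - lam) ≤ l →
        l ≤ (9 / 8) * max (Real.sqrt (1 - lam ^ 2)) (1 - lam) →
        (∫⁻ t in E ∆ Set.Icc (0 : ℝ) l, ENNReal.ofReal (t ^ (n - 1)))
          ≤ ENNReal.ofReal c *
            ((∫⁻ t in Set.Icc (0 : ℝ) (min (Real.sqrt (1 - lam ^ 2)) (1 - lam) / 2) \ E,
                ENNReal.ofReal (t ^ (n - 1)))
              + ∫⁻ t in redBdry1 E,
                  ENNReal.ofReal (t ^ (n - 1) * |l - t|) ∂Measure.count) :=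
  one_dimensional_truncation_estimate_general n lam hlam
end
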